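/- arXiv:2411.15116 — 4 statements merged into one kernel-verified Lean document; each statement's English description precedes it below -/
import Mathlib

section
/- Let F be a finite field of odd cardinality q, let φ be the quadratic character of F (the unique multiplicative character of order 2), and let T be a multiplicative character of F with values in ℂ such that T² is nontrivial. Then J(T⁻¹, T²) · J(φ·T⁻¹, T²) = q · T(16). -/
/-!
For `χ = T⁻¹` the substitution `x ↦ x⁻¹` gives `J(χ, χ⁻²) = χ(-1) J(χ, χ)`, and counting square
roots with `φ` gives the duplication formula `χ(4) J(χ, χ) = J(χ, φ)`; together,
`J(T⁻¹, T²) = T(-4) J(T⁻¹, φ)`. As `φT` has the same square as `T`, likewise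
`J(φT⁻¹, T²) = φ(-1) T(-4) J(T⁻¹φ, φ)`. By the same substitution
`J(χ, φ) J(χφ, φ) = φ(-1) J(χ, φ) J(χ⁻¹, φ⁻¹) = φ(-1) q`, and `φ(-1)² = 1`.
-/

open Finset MulChar

section

variable {F K : Type*} [Field F] [Fintype F]

lemma FiniteField.isSquare_mul_of_not_isSquare {a b : F} (ha : ¬IsSquare a)
    (hb : ¬IsSquare b) : IsSquare (a * b) := by
  classical
  have ha₀ : a ≠ 0 := by rintro rfl; exact ha .zero
  have hb₀ : b ≠ 0 := by rintro rfl; exact hb .zero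
  rw [← quadraticChar_one_iff_isSquare (mul_ne_zero ha₀ hb₀), map_mul,
    quadraticChar_neg_one_iff_not_isSquare.mpr ha, quadraticChar_neg_one_iff_not_isSquare.mpr hb,
    neg_one_mul, neg_neg]

lemma jacobiSum_eq_apply_neg_one_mul_jacobiSum_inv_mul [CommRing K] (χ ψ : MulChar F K) :
    jacobiSum χ ψ = ψ (-1) * jacobiSum (χ * ψ)⁻¹ ψ := by
  rw [jacobiSum, jacobiSum, mul_sum]
  -- `x ↦ x⁻¹` permutes all of `F` as `0⁻¹ = 0`, and both `x = 0` terms vanish.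
  refine Fintype.sum_equiv (Equiv.inv F) _ _ fun x => ?_
  rcases eq_or_ne x 0 with rfl | hx
  · simp
  have h : 1 - x = -1 * x * (1 - x⁻¹) := by field_simp; ring
  simp only [Equiv.inv_apply, inv_apply', inv_inv, mul_apply]
  rw [h, map_mul, map_mul]
  ring

section Domain

variable [CommRing K] [IsDomain K] {φ : MulChar F K}

lemma MulChar.apply_eq_quadraticChar [DecidableEq F] (hφ : φ ^ 2 = 1) (hφ' : φ ≠ 1) (a : F) :
    φ a = quadraticChar F a := by
  have apply_sq {s : F} (hs : s ≠ 0) : φ (s ^ 2) = 1 := by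
    rw [map_pow, ← pow_apply' φ two_ne_zero, hφ, one_apply (isUnit_iff_ne_zero.mpr hs)]
  have apply_of_isSquare {t : F} (ht : t ≠ 0) (h : IsSquare t) : φ t = 1 := by
    obtain ⟨s, rfl⟩ := h
    rw [← sq]
    exact apply_sq fun hs => ht (by simp [hs])
  rcases eq_or_ne a 0 with rfl | ha
  · simp
  by_cases hsq : IsSquare a
  · rw [(quadraticChar_one_iff_isSquare ha).mpr hsq, apply_of_isSquare ha hsq, Int.cast_one]
  rw [quadraticChar_neg_one_iff_not_isSquare.mpr hsq, Int.cast_neg, Int.cast_one]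
  rcases isQuadratic_iff_sq_eq_one.mpr hφ a with h0 | h1 | h
  · simpa [h0] using apply_sq ha
  · refine absurd (MulChar.ext fun u => ?_) hφ'
    rw [one_apply_coe]
    by_cases hu : IsSquare (u : F)
    · exact apply_of_isSquare u.ne_zero hu
    · have hua := apply_of_isSquare (mul_ne_zero u.ne_zero ha)
        (FiniteField.isSquare_mul_of_not_isSquare hu hsq)
      rwa [map_mul, h1, mul_one] at hua
  · exact h

lemma sum_apply_sq_eq (hF : ringChar F ≠ 2) (hφ : φ ^ 2 = 1) (hφ' : φ ≠ 1) (f : F → K) :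
    ∑ u : F, f (u ^ 2) = ∑ t : F, (1 + φ t) * f t := by
  classical
  rw [← sum_fiberwise_of_maps_to (g := fun u : F => u ^ 2) fun _ _ => mem_univ _]
  refine sum_congr rfl fun t _ => ?_
  have card_sqrts : (#{u : F | u ^ 2 = t} : K) = 1 + φ t := by
    have h := congrArg (Int.cast (R := K)) (quadraticChar_card_sqrts hF t)
    rw [Int.cast_natCast, Set.toFinset_ofPred] at h
    rw [h, apply_eq_quadraticChar hφ hφ', Int.cast_add, Int.cast_one, add_comm]
  rw [sum_congr rfl fun u hu => by rw [(mem_filter.mp hu).2], sum_const, nsmul_eq_mul,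
    card_sqrts]

lemma jacobiSum_self_eq (hF : ringChar F ≠ 2) (hφ : φ ^ 2 = 1) (hφ' : φ ≠ 1)
    {χ : MulChar F K} (hχ : χ ≠ 1) : jacobiSum χ χ = χ⁻¹ 4 * jacobiSum χ φ := by
  have h2 : (2 : F) ≠ 0 := Ring.two_ne_zero hF
  have h4 : (4 : F) ≠ 0 := by simpa [show (4 : F) = 2 * 2 by norm_num] using mul_ne_zero h2 h2
  have sum_shift : ∑ t : F, χ (1 - t) = 0 := by
    rw [← χ.sum_eq_zero_of_ne_one hχ]
    exact Fintype.sum_equiv (Equiv.subLeft 1) _ _ fun t => rfl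
  calc jacobiSum χ χ = ∑ u : F, χ (4⁻¹ * (1 - u ^ 2)) := by
        refine Fintype.sum_bijective (fun x => 1 - 2 * x)
          (Function.bijective_iff_has_inverse.mpr ⟨fun u => (1 - u) / 2, fun x => ?_, fun u => ?_⟩)
          _ _ fun u => ?_
        · field_simp
          ring
        · field_simp
          ring
        · rw [← map_mul]
          congr 1
          field_simp
          ring
    _ = χ⁻¹ 4 * ∑ t : F, (1 + φ t) * χ (1 - t) := by
        simp_rw [map_mul, ← mul_sum, inv_apply']
        rw [sum_apply_sq_eq hF hφ hφ' fun t => χ (1 - t)]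
    _ = χ⁻¹ 4 * jacobiSum χ φ := by
        simp_rw [add_mul, one_mul, sum_add_distrib, sum_shift, zero_add]
        rw [jacobiSum_comm, jacobiSum]

lemma jacobiSum_inv_sq (hF : ringChar F ≠ 2) (hφ : φ ^ 2 = 1) (hφ' : φ ≠ 1)
    {χ : MulChar F K} (hχ : χ ≠ 1) : jacobiSum χ⁻¹ (χ ^ 2) = χ (-4) * jacobiSum χ⁻¹ φ := by
  rw [jacobiSum_comm, jacobiSum_eq_apply_neg_one_mul_jacobiSum_inv_mul, sq, mul_inv_cancel_right,
    jacobiSum_self_eq hF hφ hφ' (inv_ne_one.mpr hχ), inv_inv, inv_apply', inv_neg, inv_one,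
    ← mul_assoc, ← map_mul]
  norm_num

end Domain

lemma jacobiSum_mul_jacobiSum_mul_of_sq_eq_one [Field K] (hK : ringChar K ≠ ringChar F)
    {χ φ : MulChar F K} (hφ : φ ^ 2 = 1) (hχ : χ ≠ 1) (hφ' : φ ≠ 1) (hχφ : χ * φ ≠ 1) :
    jacobiSum χ φ * jacobiSum (χ * φ) φ = φ (-1) * Fintype.card F := by
  have hφ_inv : φ⁻¹ = φ := inv_eq_of_mul_eq_one_right (by rw [← sq, hφ])
  have h := jacobiSum_mul_jacobiSum_inv hK hχ hφ' hχφ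
  rw [hφ_inv] at h
  rw [jacobiSum_eq_apply_neg_one_mul_jacobiSum_inv_mul (χ * φ), mul_assoc, ← sq, hφ, mul_one,
    mul_left_comm, h]

end

/-- Let `F` be a finite field of odd cardinality `q`, `φ` its quadratic character
(the unique multiplicative character of order 2), and `T` a multiplicative character
with values in `ℂ` such that `T²` is nontrivial.  Then
`J(T⁻¹, T²) · J(φ·T⁻¹, T²) = q · T(16)`. -/
theorem jacobiSum_wellPoised_product
    (F : Type*) [Field F] [Fintype F] (hodd : Odd (Fintype.card F))
    (φ : MulChar F ℂ) (hφ : φ ^ 2 = 1) (hφ' : φ ≠ 1)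
    (T : MulChar F ℂ) (hT : T ^ 2 ≠ 1) :
    jacobiSum T⁻¹ (T ^ 2) * jacobiSum (φ * T⁻¹) (T ^ 2)
      = (Fintype.card F : ℂ) * T 16 := by
  have hF : ringChar F ≠ 2 := fun h =>
    Nat.not_even_iff_odd.mpr hodd (Nat.even_iff.mpr (FiniteField.even_card_of_char_two h))
  have hK : ringChar ℂ ≠ ringChar F := by
    rw [ringChar.eq_zero]
    exact (CharP.ringChar_ne_zero_of_finite F).symm
  have hT₁ : T ≠ 1 := fun h => hT (by rw [h, one_pow])
  have hφT : φ * T ≠ 1 := fun h => hT (by rw [eq_inv_of_mul_eq_one_right h, inv_pow, hφ, inv_one])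
  have hφ_inv : φ⁻¹ = φ := inv_eq_of_mul_eq_one_right (by rw [← sq, hφ])
  have hφT_sq : (φ * T) ^ 2 = T ^ 2 := by rw [mul_pow, hφ, one_mul]
  have hφT_inv : (φ * T)⁻¹ = φ * T⁻¹ := by rw [mul_inv, hφ_inv]
  have hφ_neg_one : φ (-1) * φ (-1) = 1 := by rw [← map_mul, neg_mul_neg, one_mul, map_one]
  have hφ_neg_four : φ (-4) = φ (-1) := by
    rw [show (-4 : F) = -1 * 2 ^ 2 by norm_num, map_mul, map_pow, ← pow_apply' φ two_ne_zero, hφ,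
      one_apply (isUnit_iff_ne_zero.mpr (Ring.two_ne_zero hF)), mul_one]
  have hT_sixteen : T (-4) * T (-4) = T 16 := by rw [← map_mul]; norm_num
  rw [jacobiSum_inv_sq hF hφ hφ' hT₁, ← hφT_inv, ← hφT_sq, jacobiSum_inv_sq hF hφ hφ' hφT,
    hφT_inv, mul_comm φ T⁻¹, mul_mul_mul_comm,
    jacobiSum_mul_jacobiSum_mul_of_sq_eq_one hK hφ (inv_ne_one.mpr hT₁) hφ'
      (by rwa [mul_comm, ← hφT_inv, inv_ne_one]), mul_apply, hφ_neg_four]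
  linear_combination (Fintype.card F : ℂ) * (T (-4) * T (-4) * hφ_neg_one + hT_sixteen)
end

section
/- Let r, s be real numbers with 0 < r < 1, r < s, and s > 1/2. Then P(r, s) = sin(π·r) · (B(s − r, r) / B(s − 1/2, 1/2))² · P(1 − r, s − r + 1/2). -/
open Real

/-- Ascending Pochhammer symbol `(x)_k = x(x+1)⋯(x+k−1)`. -/
noncomputable def poch (x : ℝ) (k : ℕ) : ℝ := (ascPochhammer ℝ k).eval x

/-- The Beta function quotient `B(x,y) = Γ(x)Γ(y)/Γ(x+y)`. -/
noncomputable def betaR (x y : ℝ) : ℝ := Gamma x * Gamma y / Gamma (x + y)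

/-- Generalized hypergeometric series `₃F₂(a₁,a₂,a₃; b₁,b₂; z)`. -/
noncomputable def F32 (a1 a2 a3 b1 b2 z : ℝ) : ℝ :=
  ∑' k : ℕ, (poch a1 k * poch a2 k * poch a3 k)
      / (poch b1 k * poch b2 k * (k.factorial : ℝ)) * z ^ k

/-- The hypergeometric period value `P(r,s) = π · B(r, s−r) · ₃F₂(1/2,1/2,r; 1,s; 1)`. -/
noncomputable def P (r s : ℝ) : ℝ := π * betaR r (s - r) * F32 (1/2) (1/2) r 1 s 1

/-!
For `a > 0` and `e > 1/2` the double integral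
`∫₀¹ t^(-1/2) (1-t)^(e-3/2) ∫₀¹ u^(-1/2) (1-u)^(-1/2) (1-tu)^(-a) du dt`
equals `π B(1/2, e-1/2) ₃F₂(1/2, 1/2, a; 1, e; 1)`: expand `(1-tu)^(-a)` as a binomial series
and integrate termwise against two Beta weights. Euler's transformation of the inner integral,
i.e. the involutive substitution `u ↦ (1-u)/(1-tu)`, shows that `(a, e) = (1-r, s-r+1/2)` and
`(a, e) = (r, s)` give the same double integral. The Beta prefactors are then matched with the
reflection formula `Γ(r) Γ(1-r) = π / sin(πr)`. Working with `ℝ≥0∞`-valued integrals makes every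
interchange of sum and integral free of convergence conditions.
-/

open MeasureTheory Set
open scoped ENNReal

lemma poch_pos {x : ℝ} (hx : 0 < x) (k : ℕ) : 0 < poch x k :=
  ascPochhammer_pos k x hx

lemma Gamma_add_nat_eq_poch_mul {x : ℝ} (hx : 0 < x) (k : ℕ) :
    Gamma (x + k) = poch x k * Gamma x := by
  induction k with
  | zero => simp [poch]
  | succ k ih =>
    rw [Nat.cast_succ, ← add_assoc, Real.Gamma_add_one (by positivity), ih, poch, poch,
      ascPochhammer_succ_eval]
    ring

lemma betaR_pos {x y : ℝ} (hx : 0 < x) (hy : 0 < y) : 0 < betaR x y :=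
  ProbabilityTheory.beta_pos hx hy

lemma betaR_add_nat_left {x y : ℝ} (hx : 0 < x) (hxy : 0 < x + y) (k : ℕ) :
    betaR (x + k) y = betaR x y * poch x k / poch (x + y) k := by
  have := poch_pos hxy k
  have := Real.Gamma_pos_of_pos hxy
  rw [betaR, betaR, add_right_comm, Gamma_add_nat_eq_poch_mul hx, Gamma_add_nat_eq_poch_mul hxy]
  field_simp

lemma betaR_half_half : betaR (1 / 2) (1 / 2) = π := by
  rw [betaR, add_halves, Real.Gamma_one, div_one, Real.Gamma_one_half_eq,
    Real.mul_self_sqrt pi_nonneg]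

lemma poch_eq_factorial_mul_choose (a : ℝ) (k : ℕ) :
    poch a k = k.factorial * Ring.choose (a + k - 1) k := by
  rw [Ring.choose_eq_smul, smul_eq_mul, ← mul_assoc, mul_inv_cancel₀ (by positivity), one_mul,
    Polynomial.descPochhammer_smeval_eq_ascPochhammer, Polynomial.ascPochhammer_smeval_eq_eval,
    poch]
  ring_nf

lemma hasSum_poch_div_factorial_mul_pow (a : ℝ) {x : ℝ} (hx : |x| < 1) :
    HasSum (fun k : ℕ => poch a k / k.factorial * x ^ k) ((1 - x) ^ (-a)) := by
  have h := (Real.one_div_one_sub_rpow_hasFPowerSeriesOnBall_zero a).hasSum_sub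
    (y := x) (by simpa [Metric.eball_ofReal, edist_dist, Real.dist_eq] using hx)
  simp only [FormalMultilinearSeries.ofScalars_apply_eq, sub_zero, smul_eq_mul] at h
  rw [Real.rpow_neg (by linarith [(abs_lt.mp hx).2]), ← one_div]
  refine h.congr_fun fun k => ?_
  rw [poch_eq_factorial_mul_choose]
  field_simp

lemma ofReal_one_sub_rpow_neg_eq_tsum {a x : ℝ} (ha : 0 < a) (hx0 : 0 ≤ x) (hx1 : x < 1) :
    ENNReal.ofReal ((1 - x) ^ (-a))
      = ∑' k : ℕ, ENNReal.ofReal (poch a k / k.factorial * x ^ k) := by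
  have h := hasSum_poch_div_factorial_mul_pow a (abs_lt.mpr ⟨by linarith, hx1⟩)
  rw [← h.tsum_eq, ENNReal.ofReal_tsum_of_nonneg (fun k => by have := poch_pos ha k; positivity)
    h.summable]

lemma lintegral_rpow_mul_one_sub_rpow {x y : ℝ} (hx : 0 < x) (hy : 0 < y) :
    ∫⁻ t in Ioo (0 : ℝ) 1, ENNReal.ofReal (t ^ (x - 1) * (1 - t) ^ (y - 1))
      = ENNReal.ofReal (betaR x y) := by
  have hB := betaR_pos hx hy
  have h := ProbabilityTheory.lintegral_betaPDF_eq_one hx hy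
  rw [ProbabilityTheory.lintegral_betaPDF,
    show ProbabilityTheory.beta x y = betaR x y from rfl] at h
  simp_rw [mul_assoc, ENNReal.ofReal_mul (one_div_pos.2 hB).le] at h
  rw [lintegral_const_mul' _ _ ENNReal.ofReal_ne_top, ENNReal.ofReal_div_of_pos hB,
    ENNReal.ofReal_one, one_div, mul_comm] at h
  rw [ENNReal.eq_inv_of_mul_eq_one_left h, inv_inv]

lemma lintegral_rpow_mul_one_sub_rpow_mul_tsum {x y : ℝ} (hx : 0 < x) (hy : 0 < y)
    (f : ℕ → ℝ≥0∞) :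
    ∫⁻ t in Ioo (0 : ℝ) 1, ENNReal.ofReal (t ^ (x - 1) * (1 - t) ^ (y - 1)) *
        ∑' k, f k * ENNReal.ofReal (t ^ k)
      = ∑' k, f k * ENNReal.ofReal (betaR (x + k) y) := by
  have hpow : ∀ t ∈ Ioo (0 : ℝ) 1, ∀ k : ℕ,
      ENNReal.ofReal (t ^ (x - 1) * (1 - t) ^ (y - 1)) * ENNReal.ofReal (t ^ k)
        = ENNReal.ofReal (t ^ (x + k - 1) * (1 - t) ^ (y - 1)) := by
    intro t ⟨ht0, ht1⟩ k
    rw [← ENNReal.ofReal_mul (by positivity),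
      add_sub_right_comm, Real.rpow_add ht0, Real.rpow_natCast]
    ring_nf
  calc _ = ∫⁻ t in Ioo (0 : ℝ) 1, ∑' k,
          f k * ENNReal.ofReal (t ^ (x + k - 1) * (1 - t) ^ (y - 1)) := by
        refine setLIntegral_congr_fun measurableSet_Ioo fun t ht => ?_
        rw [← ENNReal.tsum_mul_left]
        refine tsum_congr fun k => ?_
        rw [mul_left_comm, hpow t ht]
    _ = _ := by
        rw [lintegral_tsum fun k => by fun_prop]
        refine tsum_congr fun k => ?_
        rw [lintegral_const_mul _ (by fun_prop), lintegral_rpow_mul_one_sub_rpow (by positivity) hy]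

noncomputable def eulerIntegrand (p q a t u : ℝ) : ℝ :=
  u ^ (p - 1) * (1 - u) ^ (q - 1) * (1 - t * u) ^ (-a)

/-- Euler's integral representation of `B(p, q) · ₂F₁(a, p; p + q; t)`. -/
noncomputable def eulerIntegral (p q a t : ℝ) : ℝ≥0∞ :=
  ∫⁻ u in Ioo (0 : ℝ) 1, ENNReal.ofReal (eulerIntegrand p q a t u)

lemma eulerIntegral_eq_tsum {p q a t : ℝ} (hp : 0 < p) (hq : 0 < q) (ha : 0 < a)
    (ht0 : 0 ≤ t) (ht1 : t < 1) :
    eulerIntegral p q a t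
      = ∑' k : ℕ, ENNReal.ofReal (poch a k / k.factorial * betaR (p + k) q)
          * ENNReal.ofReal (t ^ k) := by
  have hcoeff : ∀ k : ℕ, 0 ≤ poch a k / k.factorial := fun k => by
    have := poch_pos ha k; positivity
  have hbinom : ∀ u ∈ Ioo (0 : ℝ) 1,
      ENNReal.ofReal (eulerIntegrand p q a t u)
        = ENNReal.ofReal (u ^ (p - 1) * (1 - u) ^ (q - 1)) *
          ∑' k : ℕ, ENNReal.ofReal (poch a k / k.factorial * t ^ k) * ENNReal.ofReal (u ^ k) := by
    intro u ⟨hu0, hu1⟩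
    rw [eulerIntegrand, ENNReal.ofReal_mul (by positivity),
      ofReal_one_sub_rpow_neg_eq_tsum ha (by positivity) (by nlinarith)]
    congr 1
    refine tsum_congr fun k => ?_
    rw [← ENNReal.ofReal_mul (by have := hcoeff k; positivity), mul_pow, mul_assoc]
  rw [eulerIntegral, setLIntegral_congr_fun measurableSet_Ioo hbinom,
    lintegral_rpow_mul_one_sub_rpow_mul_tsum hp hq]
  refine tsum_congr fun k => ?_
  have := betaR_pos (by positivity : 0 < p + k) hq
  rw [← ENNReal.ofReal_mul (by have := hcoeff k; positivity),
    ← ENNReal.ofReal_mul (by have := hcoeff k; positivity)]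
  ring_nf

section EulerTransformation

variable {t u : ℝ}

lemma one_sub_div_one_sub_mul (h : 1 - t * u ≠ 0) :
    1 - (1 - u) / (1 - t * u) = u * (1 - t) / (1 - t * u) := by
  rw [one_sub_div h]; ring_nf

lemma one_sub_mul_div_one_sub_mul (h : 1 - t * u ≠ 0) :
    1 - t * ((1 - u) / (1 - t * u)) = (1 - t) / (1 - t * u) := by
  rw [mul_div_assoc', one_sub_div h]; ring_nf

lemma one_sub_mul_pos (ht : t < 1) (hu : u ∈ Ioo (0 : ℝ) 1) : 0 < 1 - t * u := by
  obtain ⟨hu0, hu1⟩ := hu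
  rcases le_or_gt t 0 with h | h <;> nlinarith

lemma div_one_sub_mul_mem_Ioo (ht : t < 1) (hu : u ∈ Ioo (0 : ℝ) 1) :
    (1 - u) / (1 - t * u) ∈ Ioo (0 : ℝ) 1 := by
  have hA := one_sub_mul_pos ht hu
  obtain ⟨hu0, hu1⟩ := hu
  exact ⟨div_pos (by linarith) hA, (div_lt_one hA).2 (by nlinarith)⟩

lemma div_one_sub_mul_involutive (ht : t < 1) (hu : u ∈ Ioo (0 : ℝ) 1) :
    (1 - (1 - u) / (1 - t * u)) / (1 - t * ((1 - u) / (1 - t * u))) = u := by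
  have hA := (one_sub_mul_pos ht hu).ne'
  rw [one_sub_div_one_sub_mul hA, one_sub_mul_div_one_sub_mul hA, div_div_div_cancel_right₀ hA,
    mul_div_cancel_right₀ u (by linarith)]

lemma eulerIntegrand_div_one_sub_mul (p q a : ℝ) (ht : t < 1) (hu : u ∈ Ioo (0 : ℝ) 1) :
    (1 - t) / (1 - t * u) ^ 2 * eulerIntegrand p q a t ((1 - u) / (1 - t * u))
      = (1 - t) ^ (q - a) * eulerIntegrand q p (p + q - a) t u := by
  have hA := one_sub_mul_pos ht hu
  obtain ⟨hu0, hu1⟩ := hu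
  have h1u : 0 < 1 - u := by linarith
  have h1t : 0 < 1 - t := by linarith
  rw [eulerIntegrand, eulerIntegrand, one_sub_div_one_sub_mul hA.ne',
    one_sub_mul_div_one_sub_mul hA.ne']
  generalize 1 - t * u = A at hA ⊢
  generalize 1 - t = B at h1t ⊢
  generalize 1 - u = C at h1u ⊢
  refine Real.log_injOn_pos (by simp only [mem_Ioi]; positivity)
    (by simp only [mem_Ioi]; positivity) ?_
  simp (disch := positivity) only [Real.log_mul, Real.log_div, Real.log_rpow, Real.log_pow]
  push_cast
  ring

lemma hasDerivAt_div_one_sub_mul (h : 1 - t * u ≠ 0) :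
    HasDerivAt (fun v => (1 - v) / (1 - t * v)) ((t - 1) / (1 - t * u) ^ 2) u := by
  have h1 : HasDerivAt (fun v => 1 - v) (-1) u := by
    simpa using (hasDerivAt_id u).const_sub 1
  have h2 : HasDerivAt (fun v => 1 - t * v) (-t) u := by
    simpa using ((hasDerivAt_id u).const_mul t).const_sub 1
  exact (h1.div h2 h).congr_deriv (by ring)

lemma eulerIntegral_eq_one_sub_rpow_mul (p q a : ℝ) (ht : t < 1) :
    eulerIntegral p q a t
      = ENNReal.ofReal ((1 - t) ^ (q - a)) * eulerIntegral q p (p + q - a) t := by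
  set φ : ℝ → ℝ := fun v => (1 - v) / (1 - t * v)
  have hmaps : MapsTo φ (Ioo 0 1) (Ioo 0 1) := fun v hv => div_one_sub_mul_mem_Ioo ht hv
  have hinv : LeftInvOn φ φ (Ioo 0 1) := fun v hv => div_one_sub_mul_involutive ht hv
  have himage : φ '' Ioo 0 1 = Ioo 0 1 :=
    hmaps.image_subset.antisymm fun v hv => ⟨φ v, hmaps hv, hinv hv⟩
  have hderiv : ∀ v ∈ Ioo (0 : ℝ) 1,
      HasDerivWithinAt φ ((t - 1) / (1 - t * v) ^ 2) (Ioo 0 1) v := fun v hv =>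
    (hasDerivAt_div_one_sub_mul (one_sub_mul_pos ht hv).ne').hasDerivWithinAt
  rw [eulerIntegral, ← himage, lintegral_image_eq_lintegral_abs_deriv_mul measurableSet_Ioo hderiv
    hinv.injOn, eulerIntegral, ← lintegral_const_mul' _ _ ENNReal.ofReal_ne_top]
  refine setLIntegral_congr_fun measurableSet_Ioo fun v hv => ?_
  have hA := one_sub_mul_pos ht hv
  rw [abs_div, abs_of_neg (by linarith), abs_of_pos (by positivity), neg_sub,
    ← ENNReal.ofReal_mul (by positivity), eulerIntegrand_div_one_sub_mul p q a ht hv,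
    ENNReal.ofReal_mul (by positivity)]

end EulerTransformation

lemma poch_div_factorial_mul_betaR_mul_betaR (a : ℝ) {e : ℝ} (he : 1 / 2 < e) (k : ℕ) :
    poch a k / k.factorial * betaR (1 / 2 + k) (1 / 2) * betaR (1 / 2 + k) (e - 1 / 2)
      = π * betaR (1 / 2) (e - 1 / 2) *
          (poch (1 / 2) k * poch (1 / 2) k * poch a k / (poch 1 k * poch e k * k.factorial)) := by
  have he0 : 0 < e := by linarith
  have := poch_pos he0 k
  have := poch_pos one_pos k
  rw [betaR_add_nat_left (by norm_num) (by norm_num),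
    betaR_add_nat_left (by norm_num) (by linarith),
    betaR_half_half, add_halves, add_sub_cancel]
  field_simp

/-- Taking `toReal` also matches the junk value `0` of `F32` when the series diverges. -/
lemma toReal_lintegral_mul_eulerIntegral {a e : ℝ} (ha : 0 < a) (he : 1 / 2 < e) :
    (∫⁻ t in Ioo (0 : ℝ) 1, ENNReal.ofReal (t ^ ((1 : ℝ) / 2 - 1) * (1 - t) ^ (e - 1 / 2 - 1)) *
        eulerIntegral (1 / 2) (1 / 2) a t).toReal
      = π * betaR (1 / 2) (e - 1 / 2) * F32 (1 / 2) (1 / 2) a 1 e 1 := by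
  have hseries : ∀ t ∈ Ioo (0 : ℝ) 1,
      ENNReal.ofReal (t ^ ((1 : ℝ) / 2 - 1) * (1 - t) ^ (e - 1 / 2 - 1)) *
          eulerIntegral (1 / 2) (1 / 2) a t
        = ENNReal.ofReal (t ^ ((1 : ℝ) / 2 - 1) * (1 - t) ^ (e - 1 / 2 - 1)) *
          ∑' k : ℕ, ENNReal.ofReal (poch a k / k.factorial * betaR (1 / 2 + k) (1 / 2))
            * ENNReal.ofReal (t ^ k) := fun t ht => by
    rw [eulerIntegral_eq_tsum (by norm_num) (by norm_num) ha ht.1.le ht.2]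
  rw [setLIntegral_congr_fun measurableSet_Ioo hseries,
    lintegral_rpow_mul_one_sub_rpow_mul_tsum (by norm_num) (by linarith),
    ENNReal.tsum_toReal_eq fun k => ENNReal.mul_ne_top ENNReal.ofReal_ne_top ENNReal.ofReal_ne_top,
    F32, ← tsum_mul_left]
  refine tsum_congr fun k => ?_
  have := poch_pos ha k
  have := betaR_pos (by positivity : 0 < 1 / 2 + (k : ℝ)) (by norm_num : (0 : ℝ) < 1 / 2)
  have := betaR_pos (by positivity : 0 < 1 / 2 + (k : ℝ)) (by linarith : 0 < e - 1 / 2)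
  rw [ENNReal.toReal_mul, ENNReal.toReal_ofReal (by positivity),
    ENNReal.toReal_ofReal (by positivity),
    one_pow, mul_one, poch_div_factorial_mul_betaR_mul_betaR a he]

lemma betaR_half_mul_F32_eq {r s : ℝ} (hr0 : 0 < r) (hr1 : r < 1) (hrs : r < s) (hs : 1 / 2 < s) :
    π * betaR (1 / 2) (s - 1 / 2) * F32 (1 / 2) (1 / 2) r 1 s 1
      = π * betaR (1 / 2) (s - r) * F32 (1 / 2) (1 / 2) (1 - r) 1 (s - r + 1 / 2) 1 := by
  have h := toReal_lintegral_mul_eulerIntegral (sub_pos.2 hr1) (by linarith : 1 / 2 < s - r + 1 / 2)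
  rw [add_sub_cancel_right] at h
  rw [← h, ← toReal_lintegral_mul_eulerIntegral hr0 hs]
  congr 1
  refine setLIntegral_congr_fun measurableSet_Ioo fun t ⟨ht0, ht1⟩ => ?_
  have h1t : 0 < 1 - t := by linarith
  rw [eulerIntegral_eq_one_sub_rpow_mul _ _ _ ht1, ← mul_assoc,
    ← ENNReal.ofReal_mul (by positivity),
    mul_assoc, ← Real.rpow_add h1t]
  ring_nf

lemma betaR_mul_betaR_half_eq {r s : ℝ} (hr0 : 0 < r) (hr1 : r < 1) (hs : 1 / 2 < s) :
    betaR r (s - r) * betaR (1 / 2) (s - r)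
      = Real.sin (π * r) * (betaR (s - r) r / betaR (s - 1 / 2) (1 / 2)) ^ 2
          * betaR (1 - r) (s - 1 / 2) * betaR (1 / 2) (s - 1 / 2) := by
  have hsin : Real.sin (π * r) = π / (Gamma r * Gamma (1 - r)) := by
    have := Real.sin_pos_of_pos_of_lt_pi (by positivity) (by nlinarith [pi_pos] : π * r < π)
    rw [Real.Gamma_mul_Gamma_one_sub]
    field_simp
  have hπ : π = Gamma (1 / 2) ^ 2 := by
    rw [Real.Gamma_one_half_eq, Real.sq_sqrt pi_nonneg]
  have := Real.Gamma_pos_of_pos hr0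
  have := Real.Gamma_pos_of_pos (by linarith : 0 < 1 - r)
  have := Real.Gamma_pos_of_pos (by linarith : 0 < s)
  have := Real.Gamma_pos_of_pos (by linarith : 0 < s - 1 / 2)
  have := Real.Gamma_pos_of_pos (by linarith : 0 < s - r + 1 / 2)
  have := Real.Gamma_pos_of_pos (by norm_num : (0 : ℝ) < 1 / 2)
  simp only [betaR]
  rw [show r + (s - r) = s by ring, show 1 / 2 + (s - r) = s - r + 1 / 2 by ring,
    show s - r + r = s by ring, show s - 1 / 2 + 1 / 2 = s by ring,
    show 1 - r + (s - 1 / 2) = s - r + 1 / 2 by ring, show 1 / 2 + (s - 1 / 2) = s by ring,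
    hsin, hπ]
  generalize Gamma r = a, Gamma (1 - r) = b, Gamma (s - r) = c, Gamma s = d,
    Gamma (s - 1 / 2) = e, Gamma (s - r + 1 / 2) = f, Gamma (1 / 2) = g at *
  field_simp

/-- Specialized Kummer relation for the period values `P(r,s)`. -/
theorem P_kummer (r s : ℝ) (hr0 : 0 < r) (hr1 : r < 1) (hrs : r < s) (hs : 1/2 < s) :
    P r s = Real.sin (π * r) * (betaR (s - r) r / betaR (s - 1/2) (1/2)) ^ 2
        * P (1 - r) (s - r + 1/2) := by
  have hF := betaR_half_mul_F32_eq hr0 hr1 hrs hs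
  have hB := betaR_mul_betaR_half_eq hr0 hr1 hs
  have hpos := betaR_pos (by norm_num : (0 : ℝ) < 1 / 2) (by linarith : 0 < s - 1 / 2)
  rw [P, P, show s - r + 1 / 2 - (1 - r) = s - 1 / 2 by ring]
  refine mul_right_cancel₀ hpos.ne' ?_
  linear_combination betaR r (s - r) * hF + π * F32 (1 / 2) (1 / 2) (1 - r) 1 (s - r + 1 / 2) 1 * hB
end

section
/- Let p be a prime with p ≡ 3 (mod 4), let F = ℤ/pℤ, let ψ : F → ℂ be a nontrivial additive character, and let φ be the quadratic character of F. For each multiplicative character χ of F with values in ℂ, set G(χ) := g(φ·χ³) · g(χ⁻³) / (g(φ·χ) · g(χ⁻¹)), where g(η) := Σ_{x ∈ F} η(x)·ψ(x) is the Gauss sum (with the convention that a nontrivial multiplicative character takes the value 0 at 0); all four Gauss sums appearing are nonzero. Then Σ_χ G(χ)² · χ(−1) = 0, where the sum runs over all multiplicative characters χ of F. -/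
/-- For a prime `p ≡ 3 (mod 4)`, a nontrivial additive character `ψ` of `ℤ/pℤ` and the
quadratic character `φ` (the unique multiplicative character of order 2), the Gauss sums
appearing in `G(χ) = g(φχ³)g(χ⁻³)/(g(φχ)g(χ⁻¹))` are all nonzero and
`Σ_χ G(χ)² χ(−1) = 0`. -/
theorem sum_G_sq_eq_zero (p : ℕ) [hp : Fact p.Prime] (hp3 : p % 4 = 3)
    (ψ : AddChar (ZMod p) ℂ) (hψ : ψ ≠ 1)
    (φ : MulChar (ZMod p) ℂ) (hφ : φ ^ 2 = 1) (hφ' : φ ≠ 1)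
    (G : MulChar (ZMod p) ℂ → ℂ)
    (hG : ∀ χ : MulChar (ZMod p) ℂ,
      G χ = gaussSum (φ * χ ^ 3) ψ * gaussSum (χ ^ 3)⁻¹ ψ
              / (gaussSum (φ * χ) ψ * gaussSum χ⁻¹ ψ)) :
    (∀ χ : MulChar (ZMod p) ℂ,
        gaussSum (φ * χ ^ 3) ψ ≠ 0 ∧ gaussSum (χ ^ 3)⁻¹ ψ ≠ 0 ∧
        gaussSum (φ * χ) ψ ≠ 0 ∧ gaussSum χ⁻¹ ψ ≠ 0) ∧
      ∑ᶠ χ : MulChar (ZMod p) ℂ, G χ ^ 2 * χ (-1) = 0 := by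
  have hprim : ψ.IsPrimitive := AddChar.IsPrimitive.of_ne_one hψ
  have hcard : ((Fintype.card (ZMod p) : ℂ)) ≠ 0 := by
    rw [ZMod.card]
    exact_mod_cast hp.out.ne_zero
  -- every Gauss sum is nonzero
  have hg : ∀ η : MulChar (ZMod p) ℂ, gaussSum η ψ ≠ 0 := by
    intro η
    rcases eq_or_ne η 1 with rfl | hη
    · have h0 : ∑ x : ZMod p, ψ x = 0 :=
        AddChar.sum_eq_zero_iff_ne_zero.mpr (by rwa [← AddChar.one_eq_zero])
      have h1 : gaussSum (1 : MulChar (ZMod p) ℂ) ψ = -1 := by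
        have key : ∀ x : ZMod p,
            (1 : MulChar (ZMod p) ℂ) x * ψ x = ψ x - if x = 0 then 1 else 0 := by
          intro x
          rcases eq_or_ne x 0 with rfl | hx
          · simp [MulChar.map_nonunit _ (not_isUnit_zero (M₀ := ZMod p))]
          · simp [MulChar.one_apply (isUnit_iff_ne_zero.mpr hx), hx]
        rw [gaussSum]
        simp_rw [key]
        rw [Finset.sum_sub_distrib, h0, Finset.sum_ite_eq' Finset.univ (0 : ZMod p) (fun _ => 1)]
        simp
      rw [h1]
      norm_num
    · exact gaussSum_ne_zero_of_nontrivial hcard hη hprim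
  refine ⟨fun χ => ⟨hg _, hg _, hg _, hg _⟩, ?_⟩
  -- φ(-1) = -1
  have hφi : φ⁻¹ = φ := inv_eq_of_mul_eq_one_right (by rw [← sq, hφ])
  have hφneg : φ (-1) = -1 := by
    obtain ⟨g, hgen⟩ := IsCyclic.exists_monoid_generator (α := (ZMod p)ˣ)
    have hord : orderOf g = p - 1 := by
      rw [orderOf_eq_card_of_forall_mem_zpowers, Nat.card_eq_fintype_card, ZMod.card_units p]
      intro x
      obtain ⟨m, hm⟩ := hgen x
      exact ⟨m, by simpa using hm⟩
    set k := (p - 1) / 2 with hk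
    have hp3' : 3 ≤ p := by omega
    have hkodd : Odd k := by
      rw [Nat.odd_iff]; omega
    have h2k : k * 2 = p - 1 := by omega
    have hklt : 0 < k ∧ k < p - 1 := by constructor <;> omega
    have hgk2 : (g ^ k) ^ 2 = 1 := by
      rw [← pow_mul, h2k, ← hord, pow_orderOf_eq_one]
    have hgk1 : g ^ k ≠ 1 := by
      intro h
      have := orderOf_dvd_of_pow_eq_one h
      rw [hord] at this
      exact absurd (Nat.le_of_dvd hklt.1 this) (by omega)
    -- so (g : ZMod p)^k = -1
    have hcoe : ((g : ZMod p)) ^ k = -1 := by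
      have h2 : ((g : ZMod p) ^ k) * ((g : ZMod p) ^ k) = 1 := by
        have := congrArg (Units.val) hgk2
        rw [pow_two] at this
        push_cast at this
        exact_mod_cast this
      rcases mul_self_eq_one_iff.mp h2 with h | h
      · exact absurd (Units.ext (by push_cast [h]; rfl) : g ^ k = 1) hgk1
      · exact h
    -- φ g = -1
    have hφg2 : φ (g : ZMod p) * φ (g : ZMod p) = 1 := by
      have := congrFun (congrArg (fun χ : MulChar (ZMod p) ℂ => (χ : ZMod p → ℂ)) hφ) (g : ZMod p)
      simpa [pow_two, MulChar.mul_apply, MulChar.one_apply g.isUnit] using this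
    have hφg : φ (g : ZMod p) = -1 := by
      rcases mul_self_eq_one_iff.mp hφg2 with h | h
      · exfalso
        apply hφ'
        apply MulChar.ext
        intro a
        obtain ⟨m, hm⟩ := hgen a
        rw [MulChar.one_apply_coe, ← hm]
        push_cast
        rw [map_pow, h, one_pow]
      · exact h
    rw [← hcoe, map_pow, hφg, hkodd.neg_one_pow]
  -- the involution χ ↦ φ * χ⁻¹
  have hinvol : Function.Involutive (fun χ : MulChar (ZMod p) ℂ => φ * χ⁻¹) := by
    intro χ
    simp only [mul_inv, inv_inv, hφi, ← mul_assoc, ← sq, hφ, one_mul]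
  let σ : Equiv.Perm (MulChar (ZMod p) ℂ) := hinvol.toPerm
  -- G is invariant under σ
  have hGσ : ∀ χ : MulChar (ZMod p) ℂ, G (φ * χ⁻¹) = G χ := by
    intro χ
    have hφ3 : φ ^ 3 = φ := by
      rw [pow_succ, hφ, one_mul]
    have e1 : φ * (φ * χ⁻¹) ^ 3 = (χ ^ 3)⁻¹ := by
      rw [mul_pow, inv_pow, hφ3, ← mul_assoc, ← sq, hφ, one_mul]
    have e2 : ((φ * χ⁻¹) ^ 3)⁻¹ = φ * χ ^ 3 := by
      rw [mul_pow, inv_pow, hφ3, mul_inv, inv_inv, hφi]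
    have e3 : φ * (φ * χ⁻¹) = χ⁻¹ := by
      rw [← mul_assoc, ← sq, hφ, one_mul]
    have e4 : (φ * χ⁻¹)⁻¹ = φ * χ := by
      rw [mul_inv, inv_inv, hφi, mul_comm]
    rw [hG, hG, e1, e2, e3, e4]
    ring
  -- value of σ χ at -1
  have hval : ∀ χ : MulChar (ZMod p) ℂ, (φ * χ⁻¹) (-1) = -(χ (-1)) := by
    intro χ
    have hinv : χ⁻¹ (-1) = χ (-1) := by
      rw [MulChar.inv_apply' χ (-1), inv_neg_one]
    rw [MulChar.mul_apply, hφneg, hinv]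
    ring
  -- finish by the involution pairing
  have key : ∀ χ : MulChar (ZMod p) ℂ,
      G (σ χ) ^ 2 * (σ χ) (-1) = -(G χ ^ 2 * χ (-1)) := by
    intro χ
    show G (φ * χ⁻¹) ^ 2 * (φ * χ⁻¹) (-1) = _
    rw [hGσ, hval]
    ring
  have h1 : (∑ᶠ χ : MulChar (ZMod p) ℂ, G χ ^ 2 * χ (-1))
      = ∑ᶠ χ : MulChar (ZMod p) ℂ, -(G χ ^ 2 * χ (-1)) := by
    conv_lhs => rw [← finsum_comp_equiv σ]
    exact finsum_congr key
  rw [finsum_neg_distrib] at h1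
  linear_combination h1 / 2
end

section
/- Let S₂ := {(r,s) ∈ ℚ × ℚ : 0 < r < s < 3/2, r ≠ 1, s ≠ 1/2, 24s ∈ ℤ, and 8(r+s) ∈ ℤ}. For each D ∈ {3, 4, 6, 8, 12, 24} let O(D) := {(i/D, (D−i)/D + ⌊2i/D⌋) : i ∈ ℕ, 1 ≤ i < D, gcd(i, D) = 1}. Then a pair (r,s) ∈ S₂ belongs to the union of the sets O(D) over D ∈ {3, 4, 6, 8, 12, 24} if and only if r + s = 1 or r + s = 2. -/
/-- The parameter set `S₂` for the `𝕂₂`-family. -/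
def S2 : Set (ℚ × ℚ) :=
  {p | 0 < p.1 ∧ p.1 < p.2 ∧ p.2 < 3/2 ∧ p.1 ≠ 1 ∧ p.2 ≠ 1/2 ∧
       (∃ z : ℤ, 24 * p.2 = z) ∧ (∃ z : ℤ, 8 * (p.1 + p.2) = z)}

/-- The Galois orbit `O(D)` of the G2 family. -/
def Oorbit (D : ℕ) : Set (ℚ × ℚ) :=
  {p | ∃ i : ℕ, 1 ≤ i ∧ i < D ∧ Nat.gcd i D = 1 ∧
        p = ((i : ℚ) / D, ((D : ℚ) - i) / D + (⌊(2 * i : ℚ) / D⌋ : ℤ))}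

/-- A pair `(r,s) ∈ S₂` lies in one of the G2 orbits `O(D)`, `D ∈ {3,4,6,8,12,24}`,
if and only if `r + s = 1` or `r + s = 2`. -/
theorem mem_G2_orbit_iff (r s : ℚ) (h : (r, s) ∈ S2) :
    ((r, s) ∈ ⋃ D ∈ ({3, 4, 6, 8, 12, 24} : Set ℕ), Oorbit D) ↔
      r + s = 1 ∨ r + s = 2 := by
  obtain ⟨hr0, hrs, hs32, hr1, hs12, ⟨z, hz⟩, -⟩ := h
  constructor
  · intro hmem
    obtain ⟨D, hD, i, hi1, hiD, hgcd, hpair⟩ := Set.mem_iUnion₂.1 hmem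
    have hr : r = (i : ℚ) / D := congrArg Prod.fst hpair
    have hs : s = ((D : ℚ) - i) / D + (⌊(2 * i : ℚ) / D⌋ : ℤ) := congrArg Prod.snd hpair
    have hD0 : (0:ℚ) < D := by
      simp only [Set.mem_insert_iff, Set.mem_singleton_iff] at hD
      rcases hD with h'|h'|h'|h'|h'|h' <;> subst h' <;> norm_num
    set f : ℤ := ⌊(2 * i : ℚ) / D⌋ with hf
    have hf0 : 0 ≤ f := Int.floor_nonneg.2 (by positivity)
    have hf2 : f < 2 := by
      rw [hf]
      have h2 : (2 * i : ℚ) / D < 2 := by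
        rw [div_lt_iff₀ hD0]
        have : (i : ℚ) < D := by exact_mod_cast hiD
        linarith
      exact Int.floor_lt.2 (by push_cast; exact h2)
    have hsum : r + s = 1 + (f : ℚ) := by
      rw [hr, hs]
      field_simp
      ring
    have : f = 0 ∨ f = 1 := by omega
    rcases this with h'|h' <;> [left; right] <;> rw [hsum, h'] <;> norm_num
  · have hs' : s = (z : ℚ) / 24 := by linarith
    rintro (h1 | h1)
    · have hrv : r = 1 - s := by linarith
      have hlb : (13 : ℤ) ≤ z := by
        have h12 : (12 : ℚ) < z := by
          by_contra hc
          push_neg at hc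
          have : s ≤ 1/2 := by rw [hs']; linarith
          rcases lt_or_eq_of_le this with h'|h'
          · linarith [hrv ▸ hrs]
          · exact hs12 h'
        have : (12:ℤ) < z := by exact_mod_cast h12
        omega
      have hub : z ≤ 23 := by
        have : (z : ℚ) < 24 := by
          have : s < 1 := by linarith
          rw [hs'] at this; linarith
        have h' : z < 24 := by exact_mod_cast this
        omega
      subst hs'
      interval_cases z
      · exact Set.mem_iUnion₂.2 ⟨24, by norm_num, 11, by norm_num, by norm_num,
          by norm_num, by rw [hrv]; norm_num [Prod.ext_iff]⟩
      · exact Set.mem_iUnion₂.2 ⟨12, by norm_num, 5, by norm_num, by norm_num,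
          by norm_num, by rw [hrv]; norm_num [Prod.ext_iff]⟩
      · exact Set.mem_iUnion₂.2 ⟨8, by norm_num, 3, by norm_num, by norm_num,
          by norm_num, by rw [hrv]; norm_num [Prod.ext_iff]⟩
      · exact Set.mem_iUnion₂.2 ⟨3, by norm_num, 1, by norm_num, by norm_num,
          by norm_num, by rw [hrv]; norm_num [Prod.ext_iff]⟩
      · exact Set.mem_iUnion₂.2 ⟨24, by norm_num, 7, by norm_num, by norm_num,
          by norm_num, by rw [hrv]; norm_num [Prod.ext_iff]⟩
      · exact Set.mem_iUnion₂.2 ⟨4, by norm_num, 1, by norm_num, by norm_num,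
          by norm_num, by rw [hrv]; norm_num [Prod.ext_iff]⟩
      · exact Set.mem_iUnion₂.2 ⟨24, by norm_num, 5, by norm_num, by norm_num,
          by norm_num, by rw [hrv]; norm_num [Prod.ext_iff]⟩
      · exact Set.mem_iUnion₂.2 ⟨6, by norm_num, 1, by norm_num, by norm_num,
          by norm_num, by rw [hrv]; norm_num [Prod.ext_iff]⟩
      · exact Set.mem_iUnion₂.2 ⟨8, by norm_num, 1, by norm_num, by norm_num,
          by norm_num, by rw [hrv]; norm_num [Prod.ext_iff]⟩
      · exact Set.mem_iUnion₂.2 ⟨12, by norm_num, 1, by norm_num, by norm_num,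
          by norm_num, by rw [hrv]; norm_num [Prod.ext_iff]⟩
      · exact Set.mem_iUnion₂.2 ⟨24, by norm_num, 1, by norm_num, by norm_num,
          by norm_num, by rw [hrv]; norm_num [Prod.ext_iff]⟩
    · have hrv : r = 2 - s := by linarith
      have hlb : (25 : ℤ) ≤ z := by
        have h24 : (24 : ℚ) < z := by
          have : 1 < s := by linarith
          rw [hs'] at this; linarith
        have : (24:ℤ) < z := by exact_mod_cast h24
        omega
      have hub : z ≤ 35 := by
        have : (z : ℚ) < 36 := by rw [hs'] at hs32; linarith
        have h' : z < 36 := by exact_mod_cast this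
        omega
      subst hs'
      interval_cases z
      · exact Set.mem_iUnion₂.2 ⟨24, by norm_num, 23, by norm_num, by norm_num,
          by norm_num, by rw [hrv]; norm_num [Prod.ext_iff]⟩
      · exact Set.mem_iUnion₂.2 ⟨12, by norm_num, 11, by norm_num, by norm_num,
          by norm_num, by rw [hrv]; norm_num [Prod.ext_iff]⟩
      · exact Set.mem_iUnion₂.2 ⟨8, by norm_num, 7, by norm_num, by norm_num,
          by norm_num, by rw [hrv]; norm_num [Prod.ext_iff]⟩
      · exact Set.mem_iUnion₂.2 ⟨6, by norm_num, 5, by norm_num, by norm_num,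
          by norm_num, by rw [hrv]; norm_num [Prod.ext_iff]⟩
      · exact Set.mem_iUnion₂.2 ⟨24, by norm_num, 19, by norm_num, by norm_num,
          by norm_num, by rw [hrv]; norm_num [Prod.ext_iff]⟩
      · exact Set.mem_iUnion₂.2 ⟨4, by norm_num, 3, by norm_num, by norm_num,
          by norm_num, by rw [hrv]; norm_num [Prod.ext_iff]⟩
      · exact Set.mem_iUnion₂.2 ⟨24, by norm_num, 17, by norm_num, by norm_num,
          by norm_num, by rw [hrv]; norm_num [Prod.ext_iff]⟩
      · exact Set.mem_iUnion₂.2 ⟨3, by norm_num, 2, by norm_num, by norm_num,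
          by norm_num, by rw [hrv]; norm_num [Prod.ext_iff]⟩
      · exact Set.mem_iUnion₂.2 ⟨8, by norm_num, 5, by norm_num, by norm_num,
          by norm_num, by rw [hrv]; norm_num [Prod.ext_iff]⟩
      · exact Set.mem_iUnion₂.2 ⟨12, by norm_num, 7, by norm_num, by norm_num,
          by norm_num, by rw [hrv]; norm_num [Prod.ext_iff]⟩
      · exact Set.mem_iUnion₂.2 ⟨24, by norm_num, 13, by norm_num, by norm_num,
          by norm_num, by rw [hrv]; norm_num [Prod.ext_iff]⟩
end
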